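/- Let 𝔛 ⊂ ℂ be a discrete, closed (locally finite) set and w : 𝔛 → Mat(k, ℂ) with w(x)² = 0 for every x ∈ 𝔛. Let m₁ and m₂ be solutions of the discrete Riemann–Hilbert problem (𝔛, w), both normalized at infinity with a common choice of data (δ, (R_k)), and suppose m₂(ζ) is an invertible matrix for every ζ ∈ ℂ∖𝔛. Then m₁(ζ) = m₂(ζ) for all ζ ∈ ℂ∖𝔛. -/

import Mathlib

noncomputable section

open scoped Topology

/-- Square complex matrices of size k. -/
abbrev Mat (k : ℕ) := Matrix (Fin k) (Fin k) ℂ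

/-- `m` is a solution of the discrete Riemann–Hilbert problem `(𝔛, w)`:
it is analytic on ℂ∖𝔛 (entrywise), and at every `x ∈ 𝔛` it has at most a simple pole
whose residue `l` (the limit of `(ζ−x)•m(ζ)`) equals the limit of `m(ζ)w(x)` as `ζ → x`. -/
def IsDRHPSol (k : ℕ) (𝔛 : Set ℂ) (w : 𝔛 → Mat k) (m : ℂ → Mat k) : Prop :=
  (∀ z ∉ 𝔛, ∀ i j, AnalyticAt ℂ (fun ζ => m ζ i j) z) ∧
  ∀ x : 𝔛, ∃ l : Mat k,
    Filter.Tendsto (fun ζ => m ζ * w x) (𝓝[≠] (x : ℂ)) (𝓝 l) ∧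
    Filter.Tendsto (fun ζ => (ζ - (x : ℂ)) • m ζ) (𝓝[≠] (x : ℂ)) (𝓝 l)

/-- `m` is normalized at infinity with data `(δ, R)`: `δ > 0`, `R n → ∞`, every circle
`{|ζ| = R n}` lies at distance at least `δ` from `𝔛`, and `m(ζ) → I` uniformly as
`|ζ| → ∞` over the region `{ζ : dist(ζ, 𝔛) ≥ δ}`. -/
def NormalizedAtInfty (k : ℕ) (𝔛 : Set ℂ) (m : ℂ → Mat k) (δ : ℝ) (R : ℕ → ℝ) : Prop :=
  0 < δ ∧ Filter.Tendsto R Filter.atTop Filter.atTop ∧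
  (∀ n, ∀ ζ : ℂ, ‖ζ‖ = R n → ∀ x ∈ 𝔛, δ ≤ dist ζ x) ∧
  ∀ ε > 0, ∃ M : ℝ, ∀ ζ : ℂ, M ≤ ‖ζ‖ → (∀ x ∈ 𝔛, δ ≤ dist ζ x) →
    ∀ i j, ‖m ζ i j - (1 : Mat k) i j‖ ≤ ε

/-!
The jump matrices `w x` are nilpotent, so the factors `1 - (ζ - x)⁻¹ • w x` have determinant `1`,
and the residue condition says precisely that `m ζ * (1 - (ζ - x)⁻¹ • w x)` is holomorphic at `x`.
Hence every entry of `m₁ * adjugate m₂` has only removable singularities on `𝔛`, extends to an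
entire function, and tends to the corresponding entry of `1` on the circles `|ζ| = R n`; by the
maximum modulus principle it is constant. So `m₁ * adjugate m₂ = 1 = m₂ * adjugate m₂` off `𝔛`,
and `m₁ = m₂` there.
-/

open Filter Metric Set Bornology

namespace Matrix

variable {n R : Type*} [Fintype n]

open Polynomial in
theorem det_one_sub_of_isNilpotent [DecidableEq n] [CommRing R] [IsDomain R] {N : Matrix n n R}
    (hN : IsNilpotent N) : (1 - N).det = 1 := by
  obtain ⟨r, -, hr⟩ := Polynomial.isUnit_iff.mp (isUnit_charpolyRev_of_isNilpotent hN)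
  have hr1 : r = 1 := by simpa [← hr] using eval_charpolyRev (M := N)
  have : (1 - N).det = N.charpolyRev.eval 1 := by
    rw [charpolyRev, ← coe_evalRingHom, RingHom.map_det]
    congr 1
    ext i j
    by_cases h : i = j <;> simp [h]
  rw [this, ← hr, hr1, eval_C]

theorem mul_mul_adjugate_mul_of_det_eq_one [DecidableEq n] [CommRing R] (A B : Matrix n n R)
    {V : Matrix n n R} (hV : V.det = 1) : A * V * (B * V).adjugate = A * B.adjugate := by
  rw [adjugate_mul_distrib, Matrix.mul_assoc, ← Matrix.mul_assoc V, mul_adjugate, hV, one_smul,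
    Matrix.one_mul]

section Differentiable

variable {𝕜 : Type*} [NontriviallyNormedField 𝕜] {A B : 𝕜 → Matrix n n 𝕜} {z : 𝕜}

theorem differentiableAt_det [DecidableEq n]
    (hA : ∀ i j, DifferentiableAt 𝕜 (fun ζ => A ζ i j) z) :
    DifferentiableAt 𝕜 (fun ζ => (A ζ).det) z := by
  simp only [det_apply']
  exact .fun_sum fun σ _ => (differentiableAt_const _).mul (.fun_finsetProd fun i _ => hA _ _)

theorem differentiableAt_adjugate_apply [DecidableEq n]
    (hA : ∀ i j, DifferentiableAt 𝕜 (fun ζ => A ζ i j) z) (i j : n) :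
    DifferentiableAt 𝕜 (fun ζ => (A ζ).adjugate i j) z := by
  simp only [adjugate_apply]
  refine differentiableAt_det fun i' j' => ?_
  by_cases h : i' = j
  · simp [h]
  · simpa [h] using hA i' j'

theorem differentiableAt_mul_apply (hA : ∀ i j, DifferentiableAt 𝕜 (fun ζ => A ζ i j) z)
    (hB : ∀ i j, DifferentiableAt 𝕜 (fun ζ => B ζ i j) z) (i j : n) :
    DifferentiableAt 𝕜 (fun ζ => (A ζ * B ζ) i j) z := by
  simp only [mul_apply]
  exact .fun_sum fun l _ => (hA i l).mul (hB l j)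

end Differentiable

end Matrix

section

variable {E : Type*} [NormedAddCommGroup E] [NormedSpace ℂ E]

/-- `(z - c) • f z` is continuous at `c` with value `0`, hence analytic there, and `f` agrees
off `c` with its `dslope` at `c`. -/
theorem Complex.exists_differentiableAt_eventuallyEq_of_tendsto_sub_smul [CompleteSpace E]
    {f : ℂ → E} {c : ℂ} (hd : ∀ᶠ z in 𝓝[≠] c, DifferentiableAt ℂ f z)
    (h0 : Tendsto (fun z => (z - c) • f z) (𝓝[≠] c) (𝓝 0)) :
    ∃ F : ℂ → E, DifferentiableAt ℂ F c ∧ f =ᶠ[𝓝[≠] c] F := by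
  set g : ℂ → E := fun z => (z - c) • f z
  have hg : AnalyticAt ℂ g c := by
    refine analyticAt_of_differentiable_on_punctured_nhds_of_continuousAt
      (hd.mono fun z hz => (differentiableAt_id.sub_const c).smul hz) ?_
    rw [← continuousWithinAt_compl_self, ContinuousWithinAt]
    simpa [g] using h0
  obtain ⟨s, hs, hgs⟩ := hg.exists_mem_nhds_analyticOnNhd
  refine ⟨dslope g c, ((differentiableOn_dslope hs).2 fun z hz =>
    (hgs z hz).differentiableAt.differentiableWithinAt).differentiableAt hs, ?_⟩
  filter_upwards [self_mem_nhdsWithin] with z hz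
  exact (dslope_sub_smul_of_ne f hz).symm

theorem Complex.exists_differentiable_eqOn_compl {S : Set ℂ} (hS : Sᶜ ∈ codiscrete ℂ) {f : ℂ → E}
    (hf : ∀ z ∉ S, DifferentiableAt ℂ f z)
    (hrem : ∀ x ∈ S, ∃ F : ℂ → E, DifferentiableAt ℂ F x ∧ f =ᶠ[𝓝[≠] x] F) :
    ∃ g : ℂ → E, Differentiable ℂ g ∧ EqOn g f Sᶜ := by
  classical
  choose! F hF hfF using hrem
  refine ⟨S.piecewise (fun z => F z z) f, fun z => ?_, fun z hz => piecewise_eq_of_notMem _ _ _ hz⟩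
  by_cases hz : z ∈ S
  · refine (hF z hz).congr_of_eventuallyEq ?_
    rw [← nhdsNE_sup_pure z, EventuallyEq, eventually_sup, eventually_pure]
    refine ⟨?_, piecewise_eq_of_mem _ _ _ hz⟩
    have hSc : Sᶜ ∈ 𝓝[≠] z := by
      simpa using disjoint_principal_right.mp (mem_codiscrete.mp hS z)
    filter_upwards [hSc, hfF z hz] with ζ hζ hfζ
    rw [piecewise_eq_of_notMem _ _ _ hζ, hfζ]
  · refine (hf z hz).congr_of_eventuallyEq ?_
    filter_upwards [(mem_codiscrete'.mp hS).1.mem_nhds hz] with ζ hζ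
    exact piecewise_eq_of_notMem _ _ _ hζ

theorem Differentiable.eq_of_tendsto_cobounded_inf_principal {f : ℂ → E}
    (hf : Differentiable ℂ f) {S : Set ℂ} (hS : ∃ᶠ r in atTop, sphere (0 : ℂ) r ⊆ S) {c : E}
    (hc : Tendsto f (cobounded ℂ ⊓ 𝓟 S) (𝓝 c)) (z : ℂ) : f z = c := by
  refine eq_of_forall_dist_le fun ε hε => ?_
  obtain ⟨M, -, hM⟩ := ((hasBasis_cobounded_norm.inf_principal S).eventually_iff).mp
    (hc.eventually (closedBall_mem_nhds c hε))
  obtain ⟨r, hrS, hr⟩ := (hS.and_eventually (eventually_ge_atTop (max M (‖z‖ + 1)))).exists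
  have hr0 : 0 < r := by have := norm_nonneg z; linarith [le_max_right M (‖z‖ + 1)]
  have hz : z ∈ closure (ball (0 : ℂ) r) := by
    rw [closure_ball _ hr0.ne', mem_closedBall, dist_zero_right]
    linarith [le_max_right M (‖z‖ + 1)]
  have := Complex.norm_le_of_forall_mem_frontier_norm_le (C := ε) isBounded_ball
    (hf.sub_const c).diffContOnCl (fun ζ hζ => ?_) hz
  · simpa [dist_eq_norm] using this
  · rw [frontier_ball _ hr0.ne'] at hζ
    have hζr : ‖ζ‖ = r := by simpa using hζ
    simpa [dist_eq_norm] using hM ⟨(le_of_max_le_left hr).trans hζr.ge, hrS hζ⟩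

end

section

variable {k : ℕ} {𝔛 : Set ℂ} {w : 𝔛 → Mat k} {m m' : ℂ → Mat k} {δ : ℝ} {R : ℕ → ℝ}

theorem IsDRHPSol.differentiableAt (hm : IsDRHPSol k 𝔛 w m) {z : ℂ} (hz : z ∉ 𝔛) (i j : Fin k) :
    DifferentiableAt ℂ (fun ζ => m ζ i j) z :=
  (hm.1 z hz i j).differentiableAt

/-- The residue condition says exactly that `(ζ - x)` times the product tends to `0`. -/
theorem IsDRHPSol.exists_factor (hm : IsDRHPSol k 𝔛 w m) (h𝔛 : 𝔛ᶜ ∈ codiscrete ℂ) (x : 𝔛) :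
    ∃ G : ℂ → Mat k, (∀ i j, DifferentiableAt ℂ (fun ζ => G ζ i j) x) ∧
      ∀ᶠ ζ in 𝓝[≠] (x : ℂ), G ζ = m ζ * (1 - (ζ - x)⁻¹ • w x) := by
  obtain ⟨l, hlw, hlm⟩ := hm.2 x
  have hoff : 𝔛ᶜ ∈ 𝓝[≠] (x : ℂ) := by
    simpa using disjoint_principal_right.mp (mem_codiscrete.mp h𝔛 x)
  have hentry : ∀ i j, ∃ F : ℂ → ℂ, DifferentiableAt ℂ F x ∧
      (fun ζ => (m ζ * (1 - (ζ - x)⁻¹ • w x)) i j) =ᶠ[𝓝[≠] (x : ℂ)] F := by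
    intro i j
    apply Complex.exists_differentiableAt_eventuallyEq_of_tendsto_sub_smul
    · filter_upwards [hoff, self_mem_nhdsWithin] with ζ hζ hζx
      have hmw := Matrix.differentiableAt_mul_apply (B := fun _ => w x)
        (hm.differentiableAt hζ) (fun _ _ => differentiableAt_const _) i j
      have hmij := hm.differentiableAt hζ i j
      simp only [Matrix.mul_sub, Matrix.mul_one, Matrix.mul_smul, Matrix.sub_apply,
        Matrix.smul_apply, smul_eq_mul]
      exact hmij.fun_sub (((differentiableAt_id.sub_const (x : ℂ)).fun_inv
        (sub_ne_zero.2 hζx)).fun_mul hmw)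
    · have h0 : Tendsto (fun ζ => (ζ - (x : ℂ)) • m ζ - m ζ * w x) (𝓝[≠] (x : ℂ)) (𝓝 0) := by
        simpa using hlm.sub hlw
      refine (tendsto_pi_nhds.1 (tendsto_pi_nhds.1 h0 i) j).congr' ?_
      filter_upwards [self_mem_nhdsWithin] with ζ hζ
      simp only [Matrix.mul_sub, Matrix.mul_one, Matrix.mul_smul,
        Matrix.sub_apply, Matrix.smul_apply, smul_eq_mul]
      rw [mul_sub, mul_inv_cancel_left₀ (sub_ne_zero.2 hζ)]
  choose F hF hmF using hentry
  refine ⟨fun ζ => Matrix.of fun i j => F i j ζ, hF, ?_⟩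
  filter_upwards [eventually_all.2 fun i => eventually_all.2 fun j => hmF i j] with ζ hζ
  ext i j
  exact (hζ i j).symm

theorem NormalizedAtInfty.tendsto_nhds_one (h : NormalizedAtInfty k 𝔛 m δ R) :
    Tendsto m (cobounded ℂ ⊓ 𝓟 {ζ | ∀ x ∈ 𝔛, δ ≤ dist ζ x}) (𝓝 1) := by
  refine tendsto_pi_nhds.2 fun i => tendsto_pi_nhds.2 fun j => ?_
  refine Metric.tendsto_nhds.2 fun ε hε => ?_
  obtain ⟨M, hM⟩ := h.2.2.2 (ε / 2) (half_pos hε)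
  filter_upwards [(eventually_cobounded_le_norm M).filter_mono inf_le_left,
    mem_inf_of_right (mem_principal_self _)] with ζ hζM hζ
  rw [dist_eq_norm]
  exact (hM ζ hζM hζ i j).trans_lt (half_lt_self hε)

theorem NormalizedAtInfty.frequently_sphere_subset (h : NormalizedAtInfty k 𝔛 m δ R) :
    ∃ᶠ r in atTop, sphere (0 : ℂ) r ⊆ {ζ | ∀ x ∈ 𝔛, δ ≤ dist ζ x} :=
  h.2.1.frequently (Frequently.of_forall fun n ζ hζ => h.2.2.1 n ζ (by simpa using hζ))

theorem IsDRHPSol.exists_differentiable_eqOn_mul_adjugate_apply (hw : ∀ x, w x * w x = 0)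
    (h𝔛 : 𝔛ᶜ ∈ codiscrete ℂ) (hm : IsDRHPSol k 𝔛 w m) (hm' : IsDRHPSol k 𝔛 w m') (i j : Fin k) :
    ∃ g : ℂ → ℂ, Differentiable ℂ g ∧ EqOn g (fun ζ => (m ζ * (m' ζ).adjugate) i j) 𝔛ᶜ := by
  refine Complex.exists_differentiable_eqOn_compl h𝔛 (fun z hz =>
    Matrix.differentiableAt_mul_apply (hm.differentiableAt hz)
      (Matrix.differentiableAt_adjugate_apply (hm'.differentiableAt hz)) i j) fun x hx => ?_
  obtain ⟨G, hG, hmG⟩ := hm.exists_factor h𝔛 ⟨x, hx⟩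
  obtain ⟨G', hG', hmG'⟩ := hm'.exists_factor h𝔛 ⟨x, hx⟩
  refine ⟨fun ζ => (G ζ * (G' ζ).adjugate) i j,
    Matrix.differentiableAt_mul_apply hG (Matrix.differentiableAt_adjugate_apply hG') i j, ?_⟩
  filter_upwards [hmG, hmG'] with ζ hG hG'
  have hnil : IsNilpotent ((ζ - x)⁻¹ • w ⟨x, hx⟩) :=
    ⟨2, by rw [pow_two, smul_mul_smul_comm, hw, smul_zero]⟩
  rw [hG, hG', Matrix.mul_mul_adjugate_mul_of_det_eq_one _ _
    (Matrix.det_one_sub_of_isNilpotent hnil)]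

theorem IsDRHPSol.mul_adjugate_eq_one (hw : ∀ x, w x * w x = 0) (h𝔛 : 𝔛ᶜ ∈ codiscrete ℂ)
    (hm : IsDRHPSol k 𝔛 w m) (hm' : IsDRHPSol k 𝔛 w m') (hnm : NormalizedAtInfty k 𝔛 m δ R)
    (hnm' : NormalizedAtInfty k 𝔛 m' δ R) {ζ : ℂ} (hζ : ζ ∉ 𝔛) :
    m ζ * (m' ζ).adjugate = 1 := by
  ext i j
  obtain ⟨g, hg, hgm⟩ := hm.exists_differentiable_eqOn_mul_adjugate_apply hw h𝔛 hm' i j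
  have hfar : {ζ | ∀ x ∈ 𝔛, δ ≤ dist ζ x} ⊆ 𝔛ᶜ := fun ζ hζ hζ𝔛 =>
    hnm.1.not_ge (by simpa using hζ ζ hζ𝔛)
  have hlim : Tendsto (fun ζ => (m ζ * (m' ζ).adjugate) i j)
      (cobounded ℂ ⊓ 𝓟 {ζ | ∀ x ∈ 𝔛, δ ≤ dist ζ x}) (𝓝 ((1 : Mat k) i j)) := by
    have := hnm.tendsto_nhds_one.mul
      ((continuous_id.matrix_adjugate.tendsto 1).comp hnm'.tendsto_nhds_one)
    simpa using tendsto_pi_nhds.1 (tendsto_pi_nhds.1 this i) j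
  refine (hgm hζ).symm.trans
    (hg.eq_of_tendsto_cobounded_inf_principal hnm.frequently_sphere_subset (hlim.congr' ?_) ζ)
  filter_upwards [mem_inf_of_right (mem_principal_self _)] with z hz
  exact (hgm (hfar hz)).symm

end

theorem statement8 (k : ℕ) (𝔛 : Set ℂ) (hdisc : DiscreteTopology 𝔛) (hclosed : IsClosed 𝔛)
    (w : 𝔛 → Mat k) (hw : ∀ x, w x * w x = 0)
    (m₁ m₂ : ℂ → Mat k)
    (h₁ : IsDRHPSol k 𝔛 w m₁) (h₂ : IsDRHPSol k 𝔛 w m₂)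
    (δ : ℝ) (R : ℕ → ℝ)
    (hn₁ : NormalizedAtInfty k 𝔛 m₁ δ R) (hn₂ : NormalizedAtInfty k 𝔛 m₂ δ R) :
    ∀ ζ ∉ 𝔛, m₁ ζ = m₂ ζ := by
  have h𝔛 : 𝔛ᶜ ∈ codiscrete ℂ :=
    compl_mem_codiscrete_iff.2 ⟨hclosed, isDiscrete_iff_discreteTopology.2 hdisc⟩
  intro ζ hζ
  have h₁₂ := h₁.mul_adjugate_eq_one hw h𝔛 h₂ hn₁ hn₂ hζ
  have h₂₂ := h₂.mul_adjugate_eq_one hw h𝔛 h₂ hn₂ hn₂ hζ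
  calc m₁ ζ = m₁ ζ * ((m₂ ζ).adjugate * m₂ ζ) := by rw [mul_eq_one_comm.1 h₂₂, mul_one]
    _ = m₂ ζ := by rw [← mul_assoc, h₁₂, one_mul]
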